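/- Let (H_X, H_Z) be a CSS code that has at least one Z logical operator, with Z distance d_Z, and let H_C ∈ F₂^{(n_c−k_c) × n_c} be a classical parity check matrix of full row rank n_c − k_c with ker(H_C) ≠ {0}. Let H'_X, H'_Z be the check matrices of the generalized thickened code. Then the thickened code has at least one Z logical operator and its Z distance equals d_Z: the minimum Hamming weight over ker(H'_X) \ rowspan(H'_Z) equals d_Z. -/
import Mathlib


open Matrix

/-- The `F₂`-span of the rows of a matrix. -/
noncomputable def rowSpan {ι κ : Type*} [Fintype ι] [Fintype κ] (M : Matrix ι κ (ZMod 2)) :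
    Submodule (ZMod 2) (κ → ZMod 2) :=
  Submodule.span (ZMod 2) (Set.range fun i => M i)

/-- The kernel `{v : M v = 0}` of a matrix, as a submodule. -/
noncomputable def kerMat {ι κ : Type*} [Fintype ι] [Fintype κ] (M : Matrix ι κ (ZMod 2)) :
    Submodule (ZMod 2) (κ → ZMod 2) :=
  LinearMap.ker M.mulVecLin

/-- The logical operators `ker(Hker) \ rowspan(Hspan)`. -/
def logicalSet {ι₁ ι₂ κ : Type*} [Fintype ι₁] [Fintype ι₂] [Fintype κ]
    (Hker : Matrix ι₁ κ (ZMod 2)) (Hspan : Matrix ι₂ κ (ZMod 2)) : Set (κ → ZMod 2) :=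
  {v | Hker.mulVec v = 0 ∧ v ∉ rowSpan Hspan}

/-- Minimum Hamming weight over a set of vectors. -/
noncomputable def minWt {ι : Type*} [Fintype ι] (S : Set (ι → ZMod 2)) : ℕ :=
  sInf (hammingNorm '' S)

/-- X check matrix of the generalized thickened code: `( H_X ⊗ I_{n_c} | I_{n_X} ⊗ H_Cᵀ )`.
Region A qubits are indexed by `Fin n × Fin nc`, region B qubits by `Fin nX × Fin r`. -/
def thickX {nX n r nc : ℕ} (HX : Matrix (Fin nX) (Fin n) (ZMod 2))
    (HC : Matrix (Fin r) (Fin nc) (ZMod 2)) :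
    Matrix (Fin nX × Fin nc) ((Fin n × Fin nc) ⊕ (Fin nX × Fin r)) (ZMod 2) :=
  Matrix.of fun s p =>
    match p with
    | Sum.inl (i, c) => if c = s.2 then HX s.1 i else 0
    | Sum.inr (x, j) => if x = s.1 then HC j s.2 else 0

/-- Z check matrix of the generalized thickened code:
first block row `( H_Z ⊗ I_{n_c} | 0 )`,
second block row `( I_n ⊗ H_C | H_Xᵀ ⊗ I_{n_c-k_c} )`. -/
def thickZ {nX nZ n r nc : ℕ} (HX : Matrix (Fin nX) (Fin n) (ZMod 2))
    (HZ : Matrix (Fin nZ) (Fin n) (ZMod 2)) (HC : Matrix (Fin r) (Fin nc) (ZMod 2)) :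
    Matrix ((Fin nZ × Fin nc) ⊕ (Fin n × Fin r)) ((Fin n × Fin nc) ⊕ (Fin nX × Fin r)) (ZMod 2) :=
  Matrix.of fun s p =>
    match s, p with
    | Sum.inl (z, c), Sum.inl (i, c') => if c' = c then HZ z i else 0
    | Sum.inl _, Sum.inr _ => 0
    | Sum.inr (i, j), Sum.inl (i', c) => if i' = i then HC j c else 0
    | Sum.inr (i, j), Sum.inr (x, j') => if j' = j then HX x i else 0

/-! ### Auxiliary lemmas -/

lemma zmod2_eq_one {x : ZMod 2} (h : x ≠ 0) : x = 1 := by revert x; decide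

lemma zmod2_add_self (x : ZMod 2) : x + x = 0 := by revert x; decide

lemma zmod2_eq_of_add_eq_zero {x y : ZMod 2} (h : x + y = 0) : x = y := by revert x y; decide

lemma mem_rowSpan_iff {ι κ : Type*} [Fintype ι] [Fintype κ] (M : Matrix ι κ (ZMod 2))
    (v : κ → ZMod 2) :
    v ∈ rowSpan M ↔ ∃ c : ι → ZMod 2, ∀ j, v j = ∑ i, c i * M i j := by
  rw [rowSpan, Submodule.mem_span_range_iff_exists_fun]
  constructor
  · rintro ⟨c, hc⟩
    exact ⟨c, fun j => by rw [← hc]; simp [Finset.sum_apply]⟩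
  · rintro ⟨c, hc⟩
    refine ⟨c, funext fun j => ?_⟩
    simp [Finset.sum_apply, (hc j).symm]

lemma HC_surj {r nc : ℕ} (HC : Matrix (Fin r) (Fin nc) (ZMod 2))
    (hrank : LinearIndependent (ZMod 2) (fun i : Fin r => HC i)) :
    Function.Surjective HC.mulVec := by
  have h1 : HC.rank = r := by simpa using hrank.rank_matrix
  have h2 : LinearMap.range HC.mulVecLin = ⊤ := by
    apply Submodule.eq_top_of_finrank_eq
    rw [Module.finrank_fintype_fun_eq_card]
    simpa [Matrix.rank] using h1
  intro y
  obtain ⟨x, hx⟩ := LinearMap.range_eq_top.mp h2 y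
  exact ⟨x, hx⟩

lemma thickX_mulVec {nX n r nc : ℕ} (HX : Matrix (Fin nX) (Fin n) (ZMod 2))
    (HC : Matrix (Fin r) (Fin nc) (ZMod 2))
    (v : (Fin n × Fin nc) ⊕ (Fin nX × Fin r) → ZMod 2) (x : Fin nX) (c : Fin nc) :
    (thickX HX HC).mulVec v (x, c) =
      (∑ i, HX x i * v (Sum.inl (i, c))) + ∑ j, HC j c * v (Sum.inr (x, j)) := by
  simp only [mulVec, dotProduct, Fintype.sum_sum_type, Fintype.sum_prod_type, thickX,
    Matrix.of_apply, ite_mul, zero_mul]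
  congr 1
  · rw [Finset.sum_comm]
    simp
  · simp

lemma thickZ_row_inl {nX nZ n r nc : ℕ} (HX : Matrix (Fin nX) (Fin n) (ZMod 2))
    (HZ : Matrix (Fin nZ) (Fin n) (ZMod 2)) (HC : Matrix (Fin r) (Fin nc) (ZMod 2))
    (cf : (Fin nZ × Fin nc) ⊕ (Fin n × Fin r) → ZMod 2) (i : Fin n) (c : Fin nc) :
    (∑ s, cf s * thickZ HX HZ HC s (Sum.inl (i, c))) =
      (∑ z, cf (Sum.inl (z, c)) * HZ z i) + ∑ j, cf (Sum.inr (i, j)) * HC j c := by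
  rw [Fintype.sum_sum_type]
  congr 1
  · rw [Fintype.sum_prod_type]
    rw [Finset.sum_comm]
    simp [thickZ, mul_ite]
  · rw [Fintype.sum_prod_type]
    simp [thickZ, mul_ite]

lemma thickZ_row_inr {nX nZ n r nc : ℕ} (HX : Matrix (Fin nX) (Fin n) (ZMod 2))
    (HZ : Matrix (Fin nZ) (Fin n) (ZMod 2)) (HC : Matrix (Fin r) (Fin nc) (ZMod 2))
    (cf : (Fin nZ × Fin nc) ⊕ (Fin n × Fin r) → ZMod 2) (x : Fin nX) (j : Fin r) :
    (∑ s, cf s * thickZ HX HZ HC s (Sum.inr (x, j))) =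
      ∑ i, cf (Sum.inr (i, j)) * HX x i := by
  rw [Fintype.sum_sum_type]
  simp [thickZ, Fintype.sum_prod_type, mul_ite]

/-- Membership in the row span of the thickened Z check matrix, componentwise. -/
lemma mem_rowSpan_thickZ_iff {nX nZ n r nc : ℕ} (HX : Matrix (Fin nX) (Fin n) (ZMod 2))
    (HZ : Matrix (Fin nZ) (Fin n) (ZMod 2)) (HC : Matrix (Fin r) (Fin nc) (ZMod 2))
    (v : (Fin n × Fin nc) ⊕ (Fin nX × Fin r) → ZMod 2) :
    v ∈ rowSpan (thickZ HX HZ HC) ↔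
      ∃ α : Fin nZ × Fin nc → ZMod 2, ∃ β : Fin n × Fin r → ZMod 2,
        (∀ i c, v (Sum.inl (i, c)) = (∑ z, α (z, c) * HZ z i) + ∑ j, β (i, j) * HC j c) ∧
        (∀ x j, v (Sum.inr (x, j)) = ∑ i, β (i, j) * HX x i) := by
  rw [mem_rowSpan_iff]
  constructor
  · rintro ⟨cf, hcf⟩
    refine ⟨fun zc => cf (Sum.inl zc), fun ij => cf (Sum.inr ij), fun i c => ?_, fun x j => ?_⟩
    · rw [hcf (Sum.inl (i, c)), thickZ_row_inl]
    · rw [hcf (Sum.inr (x, j)), thickZ_row_inr]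
  · rintro ⟨α, β, h1, h2⟩
    refine ⟨Sum.elim α β, fun p => ?_⟩
    match p with
    | Sum.inl (i, c) => rw [thickZ_row_inl]; exact h1 i c
    | Sum.inr (x, j) => rw [thickZ_row_inr]; exact h2 x j

lemma hammingNorm_eq_sum {ι : Type*} [Fintype ι] (x : ι → ZMod 2) :
    hammingNorm x = ∑ i, if x i ≠ 0 then 1 else 0 := by
  classical
  rw [hammingNorm, Finset.card_filter]

lemma hammingNorm_contract_le {n nc : ℕ} {T : Type*} [Fintype T]
    (a : (Fin n × Fin nc) ⊕ T → ZMod 2) (u : Fin nc → ZMod 2) :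
    hammingNorm (fun i : Fin n => ∑ c, a (Sum.inl (i, c)) * u c) ≤ hammingNorm a := by
  classical
  rw [hammingNorm_eq_sum, hammingNorm_eq_sum]
  rw [Fintype.sum_sum_type, Fintype.sum_prod_type]
  refine le_trans (Finset.sum_le_sum fun i _ => ?_) (Nat.le_add_right _ _)
  by_cases h : (∑ c, a (Sum.inl (i, c)) * u c) = 0
  · simp [h]
  · have hex : ∃ c, a (Sum.inl (i, c)) ≠ 0 := by
      by_contra hall
      push_neg at hall
      exact h (Finset.sum_eq_zero fun c _ => by rw [hall c, zero_mul])
    obtain ⟨c, hc⟩ := hex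
    simp only [h, if_true, ne_eq, not_false_eq_true]
    calc 1 = (if a (Sum.inl (i, c)) ≠ 0 then 1 else 0) := by simp [hc]
    _ ≤ ∑ c', if a (Sum.inl (i, c')) ≠ 0 then 1 else 0 :=
        Finset.single_le_sum (f := fun c' => if a (Sum.inl (i, c')) ≠ 0 then 1 else 0)
          (fun _ _ => Nat.zero_le _) (Finset.mem_univ c)

lemma hammingNorm_embed {n nc : ℕ} {T : Type*} [Fintype T]
    (w : Fin n → ZMod 2) (c0 : Fin nc) :
    hammingNorm (Sum.elim (fun q : Fin n × Fin nc => if q.2 = c0 then w q.1 else 0)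
      (fun _ : T => (0 : ZMod 2))) = hammingNorm w := by
  classical
  rw [hammingNorm_eq_sum, hammingNorm_eq_sum]
  rw [Fintype.sum_sum_type, Fintype.sum_prod_type]
  have : ∀ i : Fin n, (∑ c', if (if c' = c0 then w i else 0) ≠ 0 then 1 else 0)
      = if w i ≠ 0 then 1 else 0 := by
    intro i
    rw [Finset.sum_eq_single c0]
    · simp
    · intro b _ hb; simp [hb]
    · simp
  simp only [Sum.elim_inl, Sum.elim_inr, ne_eq, not_true_eq_false, if_false]
  rw [Finset.sum_congr rfl (fun i _ => this i)]
  simp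

/-- Embedding a logical operator of the original code into the thickened code. -/
lemma embed_logical {nX nZ n r nc : ℕ} (HX : Matrix (Fin nX) (Fin n) (ZMod 2))
    (HZ : Matrix (Fin nZ) (Fin n) (ZMod 2)) (HC : Matrix (Fin r) (Fin nc) (ZMod 2))
    (u : Fin nc → ZMod 2) (huk : HC.mulVec u = 0) (c0 : Fin nc) (hc0 : u c0 = 1)
    (w : Fin n → ZMod 2) (hw : w ∈ logicalSet HX HZ) :
    (Sum.elim (fun q : Fin n × Fin nc => if q.2 = c0 then w q.1 else 0)
      (fun _ : Fin nX × Fin r => (0 : ZMod 2))) ∈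
      logicalSet (thickX HX HC) (thickZ HX HZ HC) := by
  classical
  obtain ⟨hwker, hwspan⟩ := hw
  constructor
  · funext s
    obtain ⟨x, c⟩ := s
    rw [thickX_mulVec]
    simp only [Sum.elim_inl, Sum.elim_inr, mul_zero, Finset.sum_const_zero, add_zero,
      Pi.zero_apply, mul_ite]
    by_cases hc : c = c0
    · subst hc
      simp only [if_pos rfl]
      have := congrFun hwker x
      simpa [mulVec, dotProduct] using this
    · simp [hc]
  · intro hmem
    rw [mem_rowSpan_thickZ_iff] at hmem
    obtain ⟨α, β, h1, _⟩ := hmem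
    apply hwspan
    rw [mem_rowSpan_iff]
    refine ⟨fun z => ∑ c, u c * α (z, c), fun i => ?_⟩
    have key : ∀ c, (if c = c0 then w i else 0) =
        (∑ z, α (z, c) * HZ z i) + ∑ j, β (i, j) * HC j c := fun c => by
      simpa using h1 i c
    have hker0 : ∀ j, (∑ c, HC j c * u c) = 0 := fun j => by
      simpa [Matrix.mulVec, dotProduct] using congrFun huk j
    calc w i = ∑ c, u c * (if c = c0 then w i else 0) := by
          rw [Finset.sum_eq_single c0 (fun b _ hb => by simp [hb]) (by simp)]
          simp [hc0]
      _ = ∑ c, u c * ((∑ z, α (z, c) * HZ z i) + ∑ j, β (i, j) * HC j c) :=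
          Finset.sum_congr rfl fun c _ => by rw [key c]
      _ = (∑ c, ∑ z, u c * α (z, c) * HZ z i) + ∑ c, ∑ j, β (i, j) * (HC j c * u c) := by
          rw [← Finset.sum_add_distrib]
          refine Finset.sum_congr rfl fun c _ => ?_
          rw [mul_add, Finset.mul_sum, Finset.mul_sum]
          congr 1
          · exact Finset.sum_congr rfl fun z _ => by ring
          · exact Finset.sum_congr rfl fun j _ => by ring
      _ = (∑ z, (∑ c, u c * α (z, c)) * HZ z i) + ∑ j, β (i, j) * (∑ c, HC j c * u c) := by
          congr 1
          · rw [Finset.sum_comm]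
            exact Finset.sum_congr rfl fun z _ => by rw [Finset.sum_mul]
          · rw [Finset.sum_comm]
            exact Finset.sum_congr rfl fun j _ => by rw [Finset.mul_sum]
      _ = ∑ z, (∑ c, u c * α (z, c)) * HZ z i := by
          rw [Finset.sum_congr rfl (fun j _ => by rw [hker0 j, mul_zero] :
            ∀ j ∈ Finset.univ, β (i, j) * (∑ c, HC j c * u c) = 0)]
          rw [Finset.sum_const_zero, add_zero]

/-- Contracting a logical operator of the thickened code to one of the original code. -/
lemma contract_logical {nX nZ n r nc : ℕ} (HX : Matrix (Fin nX) (Fin n) (ZMod 2))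
    (HZ : Matrix (Fin nZ) (Fin n) (ZMod 2)) (HC : Matrix (Fin r) (Fin nc) (ZMod 2))
    (hrank : LinearIndependent (ZMod 2) (fun i : Fin r => HC i))
    (v : (Fin n × Fin nc) ⊕ (Fin nX × Fin r) → ZMod 2)
    (hvker : (thickX HX HC).mulVec v = 0) (hvspan : v ∉ rowSpan (thickZ HX HZ HC)) :
    ∃ u, HC.mulVec u = 0 ∧ (fun i => ∑ c, v (Sum.inl (i, c)) * u c) ∈ logicalSet HX HZ := by
  classical
  have hker : ∀ x c, (∑ i, HX x i * v (Sum.inl (i, c))) = ∑ j, HC j c * v (Sum.inr (x, j)) := by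
    intro x c
    apply zmod2_eq_of_add_eq_zero
    have h := congrFun hvker (x, c)
    rw [thickX_mulVec] at h
    simpa using h
  have hdot : ∀ (u : Fin nc → ZMod 2) (x : Fin nX),
      (∑ i, HX x i * ∑ c, v (Sum.inl (i, c)) * u c) =
        ∑ j', v (Sum.inr (x, j')) * ∑ c, HC j' c * u c := by
    intro u x
    calc (∑ i, HX x i * ∑ c, v (Sum.inl (i, c)) * u c)
        = ∑ i, ∑ c, u c * (HX x i * v (Sum.inl (i, c))) :=
          Finset.sum_congr rfl fun i _ => by
            rw [Finset.mul_sum]; exact Finset.sum_congr rfl fun c _ => by ring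
      _ = ∑ c, u c * ∑ i, HX x i * v (Sum.inl (i, c)) := by
          rw [Finset.sum_comm]
          exact Finset.sum_congr rfl fun c _ => by rw [Finset.mul_sum]
      _ = ∑ c, u c * ∑ j, HC j c * v (Sum.inr (x, j)) :=
          Finset.sum_congr rfl fun c _ => by rw [hker x c]
      _ = ∑ c, ∑ j, v (Sum.inr (x, j)) * (HC j c * u c) :=
          Finset.sum_congr rfl fun c _ => by
            rw [Finset.mul_sum]; exact Finset.sum_congr rfl fun j _ => by ring
      _ = ∑ j', v (Sum.inr (x, j')) * ∑ c, HC j' c * u c := by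
          rw [Finset.sum_comm]
          exact Finset.sum_congr rfl fun j _ => by rw [Finset.mul_sum]
  have hXker : ∀ u : Fin nc → ZMod 2, HC.mulVec u = 0 →
      HX.mulVec (fun i => ∑ c, v (Sum.inl (i, c)) * u c) = 0 := by
    intro u hu
    funext x
    show (∑ i, HX x i * ∑ c, v (Sum.inl (i, c)) * u c) = 0
    rw [hdot u x]
    refine Finset.sum_eq_zero fun j' _ => ?_
    have h0 : (∑ c, HC j' c * u c) = 0 := by
      simpa [Matrix.mulVec, dotProduct] using congrFun hu j'
    rw [h0, mul_zero]
  by_contra hcon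
  push_neg at hcon
  have hall : ∀ u : Fin nc → ZMod 2, HC.mulVec u = 0 →
      (fun i => ∑ c, v (Sum.inl (i, c)) * u c) ∈ rowSpan HZ := by
    intro u hu
    by_contra hnot
    exact hcon u hu ⟨hXker u hu, hnot⟩
  -- a right inverse of H_C
  choose U hU using fun j : Fin r => HC_surj HC hrank (Pi.single j 1)
  have hUc : ∀ (j : Fin r) (j' : Fin r),
      (∑ c, HC j' c * U j c) = if j' = j then 1 else 0 := by
    intro j j'
    have := congrFun (hU j) j'
    simpa [Matrix.mulVec, dotProduct, Pi.single_apply] using this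
  set M : Fin n → Fin r → ZMod 2 := fun i j => ∑ c, v (Sum.inl (i, c)) * U j c with hMdef
  -- the vector e_c + ∑_j H_C j c • U j is in ker H_C
  have hzc : ∀ c : Fin nc,
      HC.mulVec (fun c' => (if c' = c then 1 else 0) + ∑ j, HC j c * U j c') = 0 := by
    intro c
    funext j'
    show (∑ c', HC j' c' * ((if c' = c then 1 else 0) + ∑ j, HC j c * U j c')) = 0
    have e1 : (∑ c', HC j' c' * ((if c' = c then 1 else 0) + ∑ j, HC j c * U j c')) =
        (∑ c', HC j' c' * (if c' = c then 1 else 0)) +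
          ∑ c', ∑ j, HC j c * (HC j' c' * U j c') := by
      rw [← Finset.sum_add_distrib]
      refine Finset.sum_congr rfl fun c' _ => ?_
      rw [mul_add, Finset.mul_sum]
      congr 1
      exact Finset.sum_congr rfl fun j _ => by ring
    rw [e1]
    have e2 : (∑ c', HC j' c' * (if c' = c then 1 else 0)) = HC j' c := by
      rw [Finset.sum_eq_single c (fun b _ hb => by simp [hb]) (by simp)]
      simp
    have e3 : (∑ c', ∑ j, HC j c * (HC j' c' * U j c')) = HC j' c := by
      rw [Finset.sum_comm]
      calc (∑ j, ∑ c', HC j c * (HC j' c' * U j c'))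
          = ∑ j, HC j c * ∑ c', HC j' c' * U j c' :=
            Finset.sum_congr rfl fun j _ => by rw [Finset.mul_sum]
        _ = ∑ j, HC j c * (if j' = j then 1 else 0) :=
            Finset.sum_congr rfl fun j _ => by rw [hUc j j']
        _ = HC j' c := by
            rw [Finset.sum_eq_single j' (fun b _ hb => by simp [Ne.symm hb]) (by simp)]
            simp
    rw [e2, e3, zmod2_add_self]
  have hcoef : ∀ c : Fin nc, ∃ γ : Fin nZ → ZMod 2, ∀ i,
      v (Sum.inl (i, c)) + ∑ j, HC j c * M i j = ∑ z, γ z * HZ z i := by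
    intro c
    have hmem := hall _ (hzc c)
    rw [mem_rowSpan_iff] at hmem
    obtain ⟨γ, hγ⟩ := hmem
    refine ⟨γ, fun i => ?_⟩
    rw [← hγ i]
    calc v (Sum.inl (i, c)) + ∑ j, HC j c * M i j
        = (∑ c', v (Sum.inl (i, c')) * (if c' = c then 1 else 0)) +
            ∑ c', ∑ j, HC j c * (v (Sum.inl (i, c')) * U j c') := by
          congr 1
          · rw [Finset.sum_eq_single c (fun b _ hb => by simp [hb]) (by simp)]
            simp
          · rw [Finset.sum_comm]
            refine Finset.sum_congr rfl fun j _ => ?_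
            show HC j c * (∑ c', v (Sum.inl (i, c')) * U j c') = _
            rw [Finset.mul_sum]
      _ = ∑ c', v (Sum.inl (i, c')) *
            ((if c' = c then 1 else 0) + ∑ j, HC j c * U j c') := by
          rw [← Finset.sum_add_distrib]
          refine Finset.sum_congr rfl fun c' _ => ?_
          rw [mul_add, Finset.mul_sum]
          congr 1
          exact Finset.sum_congr rfl fun j _ => by ring
  choose γ hγ using hcoef
  exact absurd (by
    rw [mem_rowSpan_thickZ_iff]
    refine ⟨fun zc => γ zc.2 zc.1, fun ij => M ij.1 ij.2, fun i c => ?_, fun x j => ?_⟩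
    · calc v (Sum.inl (i, c))
          = (v (Sum.inl (i, c)) + ∑ j, HC j c * M i j) + ∑ j, HC j c * M i j := by
            rw [add_assoc, zmod2_add_self, add_zero]
        _ = (∑ z, γ c z * HZ z i) + ∑ j, M i j * HC j c := by
            rw [hγ c i]
            congr 1
            exact Finset.sum_congr rfl fun j _ => mul_comm _ _
    · calc v (Sum.inr (x, j))
          = ∑ j', v (Sum.inr (x, j')) * (if j' = j then 1 else 0) := by
            rw [Finset.sum_eq_single j (fun b _ hb => by simp [hb]) (by simp)]
            simp
        _ = ∑ j', v (Sum.inr (x, j')) * ∑ c, HC j' c * U j c :=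
            Finset.sum_congr rfl fun j' _ => by rw [hUc j j']
        _ = ∑ i, HX x i * ∑ c, v (Sum.inl (i, c)) * U j c := (hdot (U j) x).symm
        _ = ∑ i, M i j * HX x i :=
            Finset.sum_congr rfl fun i _ => by rw [hMdef]; ring
    ) hvspan

/-- **Generalized thickening preserves the Z distance.** -/
theorem thickening_Z_distance {nX nZ n r nc : ℕ}
    (HX : Matrix (Fin nX) (Fin n) (ZMod 2)) (HZ : Matrix (Fin nZ) (Fin n) (ZMod 2))
    (HC : Matrix (Fin r) (Fin nc) (ZMod 2))
    (hcss : HX * HZ.transpose = 0)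
    (hrank : LinearIndependent (ZMod 2) (fun i : Fin r => HC i))
    (hkc : ∃ v : Fin nc → ZMod 2, HC.mulVec v = 0 ∧ v ≠ 0)
    (hlog : (logicalSet HX HZ).Nonempty) :
    (logicalSet (thickX HX HC) (thickZ HX HZ HC)).Nonempty ∧
      minWt (logicalSet (thickX HX HC) (thickZ HX HZ HC)) = minWt (logicalSet HX HZ) := by
  classical
  obtain ⟨u, huk, hune⟩ := hkc
  have hex : ∃ c0, u c0 ≠ 0 := by
    by_contra h
    push_neg at h
    exact hune (funext fun c => h c)
  obtain ⟨c0, hc0ne⟩ := hex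
  have hc0 : u c0 = 1 := zmod2_eq_one hc0ne
  have hne : (hammingNorm '' logicalSet HX HZ).Nonempty := hlog.image _
  obtain ⟨w0, hw0log, hw0⟩ := Nat.sInf_mem hne
  set v0 := Sum.elim (fun q : Fin n × Fin nc => if q.2 = c0 then w0 q.1 else 0)
    (fun _ : Fin nX × Fin r => (0 : ZMod 2)) with hv0def
  have hv0log : v0 ∈ logicalSet (thickX HX HC) (thickZ HX HZ HC) :=
    embed_logical HX HZ HC u huk c0 hc0 w0 hw0log
  refine ⟨⟨v0, hv0log⟩, le_antisymm ?_ ?_⟩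
  · have hwt : hammingNorm v0 = hammingNorm w0 := hammingNorm_embed w0 c0
    calc minWt (logicalSet (thickX HX HC) (thickZ HX HZ HC))
        ≤ hammingNorm v0 := Nat.sInf_le ⟨v0, hv0log, rfl⟩
      _ = minWt (logicalSet HX HZ) := by rw [hwt]; exact hw0
  · refine le_csInf ⟨hammingNorm v0, ⟨v0, hv0log, rfl⟩⟩ ?_
    rintro m ⟨v, hv, rfl⟩
    obtain ⟨u', hu'k, hu'log⟩ := contract_logical HX HZ HC hrank v hv.1 hv.2
    calc minWt (logicalSet HX HZ)
        ≤ hammingNorm (fun i => ∑ c, v (Sum.inl (i, c)) * u' c) :=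
          Nat.sInf_le ⟨_, hu'log, rfl⟩
      _ ≤ hammingNorm v := hammingNorm_contract_le v u'
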